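/- The correctability condition [a, E_i† E_j] = 0 for all a ∈ A and all i, j is equivalent to the identity N̂ = N̂ ∘ P_{A'} between channels, where N̂ is a channel complementary to N and P_{A'} is the orthogonal projection onto the commutant of A. -/

import Mathlib

open Matrix Kronecker MeasureTheory
open scoped ComplexOrder

noncomputable section

/-- Square complex matrices of size `n`. -/
abbrev Mat (n : ℕ) := Matrix (Fin n) (Fin n) ℂ

/-- Operator norm (spectral norm) of a square matrix. -/
noncomputable def opNorm {m : Type*} [Fintype m] [DecidableEq m]
    (A : Matrix m m ℂ) : ℝ :=
  ‖Matrix.toEuclideanCLM (𝕜 := ℂ) A‖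

/-- Trace norm of a square matrix. -/
noncomputable def traceNorm {m : Type*} [Fintype m] [DecidableEq m]
    (A : Matrix m m ℂ) : ℝ :=
  (((Matrix.posSemidef_conjTranspose_mul_self A).1.eigenvectorUnitary : Matrix m m ℂ) *
    Matrix.diagonal (((↑) : ℝ → ℂ) ∘ Real.sqrt ∘ (Matrix.posSemidef_conjTranspose_mul_self A).1.eigenvalues) *
    (star ((Matrix.posSemidef_conjTranspose_mul_self A).1.eigenvectorUnitary : Matrix m m ℂ))).trace.re

/-- Trivial extension `Φ ⊗ id` of a map on matrices, defined entrywise. -/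
def extendId {a b : ℕ} (Φ : Mat a → Mat b) (m : ℕ)
    (M : Matrix (Fin a × Fin m) (Fin a × Fin m) ℂ) :
    Matrix (Fin b × Fin m) (Fin b × Fin m) ℂ :=
  Matrix.of fun r c => Φ (Matrix.of fun p q => M (p, r.2) (q, c.2)) r.1 c.1

/-- Diamond norm of a (difference of) map(s) `Mat a → Mat b`, with ancilla of
dimension equal to the input dimension. -/
noncomputable def dnorm {a b : ℕ} (Φ : Mat a → Mat b) : ℝ :=
  ⨆ ρ : {ρ : Matrix (Fin a × Fin a) (Fin a × Fin a) ℂ // ρ.PosSemidef ∧ ρ.trace = 1},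
    traceNorm (extendId Φ a ρ.1)

/-- A map is a quantum channel (CPTP) iff it admits a Kraus representation. -/
def IsCPTP {a b : ℕ} (Φ : Mat a → Mat b) : Prop :=
  ∃ (κ : ℕ) (K : Fin κ → Matrix (Fin b) (Fin a) ℂ),
    (∀ ρ, Φ ρ = ∑ i, K i * ρ * (K i)ᴴ) ∧ (∑ i, (K i)ᴴ * K i = 1)

/-- `Nh` is a complementary channel of `N` (with environment of dimension `e`). -/
def IsComplementary {a b e : ℕ} (N : Mat a → Mat b) (Nh : Mat a → Mat e) : Prop :=
  ∃ K : Fin e → Matrix (Fin b) (Fin a) ℂ,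
    (∀ ρ, N ρ = ∑ i, K i * ρ * (K i)ᴴ) ∧ (∑ i, (K i)ᴴ * K i = 1) ∧
    (∀ ρ, Nh ρ = Matrix.of fun i j => (K i * ρ * (K j)ᴴ).trace)

/-- The commutant of a set of matrices. -/
def commutant {n : ℕ} (A : Set (Mat n)) : Set (Mat n) :=
  {X | ∀ a ∈ A, a * X = X * a}

/-- `P` is the Hilbert–Schmidt-orthogonal projection onto the set `S`. -/
def IsHSProjectionOnto {n : ℕ} (P : Mat n → Mat n) (S : Set (Mat n)) : Prop :=
  (∀ X, P X ∈ S) ∧ (∀ X ∈ S, P X = X) ∧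
  (∀ X Y, ((P X)ᴴ * Y).trace = (Xᴴ * P Y).trace)

end

/-
Both sides say that every operator `E_i† E_j` lies in the commutant `A'`. Entrywise,
`N̂(ρ)_{ij} = tr((E_j† E_i) ρ)`, and self-adjointness of `P_{A'}` turns `tr(M P_{A'}(ρ))` into
`tr(P_{A'}(M†)† ρ)`. So `N̂ = N̂ ∘ P_{A'}` holds iff `P_{A'}` fixes every `(E_j† E_i)† = E_i† E_j`,
and the fixed points of a projection onto `A'` are exactly the elements of `A'`.
-/

namespace IsHSProjectionOnto

variable {n : ℕ} {P : Mat n → Mat n} {S : Set (Mat n)}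

theorem apply_eq_self_iff (hP : IsHSProjectionOnto P S) {X : Mat n} : P X = X ↔ X ∈ S :=
  ⟨fun h => h ▸ hP.1 X, hP.2.1 X⟩

theorem trace_mul_apply (hP : IsHSProjectionOnto P S) (M ρ : Mat n) :
    (M * P ρ).trace = ((P Mᴴ)ᴴ * ρ).trace := by
  simpa using (hP.2.2 Mᴴ ρ).symm

theorem forall_trace_mul_eq_trace_mul_apply_iff (hP : IsHSProjectionOnto P S) (M : Mat n) :
    (∀ ρ, (M * ρ).trace = (M * P ρ).trace) ↔ Mᴴ ∈ S := by
  simp_rw [hP.trace_mul_apply, ← ext_iff_trace_mul_right, ← hP.apply_eq_self_iff]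
  rw [← conjTranspose_inj, conjTranspose_conjTranspose, eq_comm]

end IsHSProjectionOnto

theorem stmt_10_general {d b k : ℕ} (E : Fin k → Matrix (Fin b) (Fin d) ℂ)
    (Nh : Mat d → Mat k)
    (hNh : ∀ ρ, Nh ρ = Matrix.of fun i j => (E i * ρ * (E j)ᴴ).trace)
    (A : StarSubalgebra ℂ (Mat d))
    (P' : Mat d → Mat d)
    (hP' : IsHSProjectionOnto P' (commutant (A : Set (Mat d)))) :
    (∀ a ∈ A, ∀ i j, a * ((E i)ᴴ * E j) = ((E i)ᴴ * E j) * a) ↔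
      ∀ ρ, Nh ρ = Nh (P' ρ) := by
  have hNh_eq_iff : ∀ ρ σ, Nh ρ = Nh σ ↔
      ∀ i j, ((E j)ᴴ * E i * ρ).trace = ((E j)ᴴ * E i * σ).trace := by
    intro ρ σ
    simp only [hNh, ← Matrix.ext_iff, of_apply, trace_mul_cycle (E _)]
  have hfixed_iff : ∀ i j, (∀ ρ, ((E j)ᴴ * E i * ρ).trace = ((E j)ᴴ * E i * P' ρ).trace) ↔
      (E i)ᴴ * E j ∈ commutant (A : Set (Mat d)) := fun i j => by
    simpa using hP'.forall_trace_mul_eq_trace_mul_apply_iff ((E j)ᴴ * E i)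
  simp_rw [hNh_eq_iff]
  exact ⟨fun h ρ i j => (hfixed_iff i j).2 (fun a ha => h a ha i j) ρ,
    fun h a ha i j => (hfixed_iff i j).1 (fun ρ => h ρ i j) a ha⟩

/-- the commutation condition `[a, E_i†E_j] = 0` is equivalent to
`N̂ = N̂ ∘ P_{A'}`. -/
theorem stmt_10 {d b k : ℕ} (E : Fin k → Matrix (Fin b) (Fin d) ℂ)
    (hE : ∑ i, (E i)ᴴ * E i = 1)
    (Nh : Mat d → Mat k)
    (hNh : ∀ ρ, Nh ρ = Matrix.of fun i j => (E i * ρ * (E j)ᴴ).trace)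
    (A : StarSubalgebra ℂ (Mat d))
    (P' : Mat d → Mat d)
    (hP' : IsHSProjectionOnto P' (commutant (A : Set (Mat d)))) :
    (∀ a ∈ A, ∀ i j, a * ((E i)ᴴ * E j) = ((E i)ᴴ * E j) * a) ↔
      ∀ ρ, Nh ρ = Nh (P' ρ) :=
  stmt_10_general E Nh hNh A P' hP'
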